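/- Let Ψ : D → ℝ³ parametrize a surface with fundamental forms I = du² + 2 cos φ du dv + dv² (φ ∈ (0,π)) and II = L du² + N dv². Suppose K = 0 everywhere on D, L ≠ 0 and N = 0 everywhere on D. Then φ_v = 0 everywhere, and locally Ψ(u,v) = β(u) + v·a for some curve β and constant unit vector a; i.e., S is a cylindrical surface. -/

import Mathlib

open Matrix Real

/-- Partial derivative with respect to the first variable. -/
noncomputable def pu {V : Type*} [NormedAddCommGroup V] [NormedSpace ℝ V]
    (f : ℝ → ℝ → V) (u v : ℝ) : V := deriv (fun x => f x v) u

/-- Partial derivative with respect to the second variable. -/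
noncomputable def pv {V : Type*} [NormedAddCommGroup V] [NormedSpace ℝ V]
    (f : ℝ → ℝ → V) (u v : ℝ) : V := deriv (fun y => f u y) v

section slices
variable {V : Type*} [NormedAddCommGroup V] [NormedSpace ℝ V]

lemma slice_u (H : ℝ → ℝ → V) (hH : ContDiff ℝ (⊤ : ℕ∞) fun p : ℝ × ℝ => H p.1 p.2) (u v : ℝ) :
    HasDerivAt (fun x => H x v) (pu H u v) u := by
  have hd : DifferentiableAt ℝ (fun x => H x v) u := by
    have := ((hH.differentiable (by simp)).comp
      (differentiable_id.prodMk (differentiable_const v))).differentiableAt (x := u)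
    exact this
  exact hd.hasDerivAt

lemma slice_v (H : ℝ → ℝ → V) (hH : ContDiff ℝ (⊤ : ℕ∞) fun p : ℝ × ℝ => H p.1 p.2) (u v : ℝ) :
    HasDerivAt (fun y => H u y) (pv H u v) v := by
  have hd : DifferentiableAt ℝ (fun y => H u y) v := by
    have := ((hH.differentiable (by simp)).comp
      ((differentiable_const u).prodMk differentiable_id)).differentiableAt (x := v)
    exact this
  exact hd.hasDerivAt

lemma pu_eq (H : ℝ → ℝ → V) (hH : ContDiff ℝ (⊤ : ℕ∞) fun p : ℝ × ℝ => H p.1 p.2) (u v : ℝ) :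
    pu H u v = fderiv ℝ (fun p : ℝ × ℝ => H p.1 p.2) (u, v) (1, 0) := by
  have h1 : HasDerivAt (fun x : ℝ => (x, v)) ((1:ℝ), (0:ℝ)) u :=
    (hasDerivAt_id u).prodMk (hasDerivAt_const u v)
  have h2 := (((hH.differentiable (by simp)) (u, v)).hasFDerivAt).comp_hasDerivAt u h1
  exact h2.deriv ▸ rfl

lemma pv_eq (H : ℝ → ℝ → V) (hH : ContDiff ℝ (⊤ : ℕ∞) fun p : ℝ × ℝ => H p.1 p.2) (u v : ℝ) :
    pv H u v = fderiv ℝ (fun p : ℝ × ℝ => H p.1 p.2) (u, v) (0, 1) := by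
  have h1 : HasDerivAt (fun y : ℝ => (u, y)) ((0:ℝ), (1:ℝ)) v :=
    (hasDerivAt_const v u).prodMk (hasDerivAt_id v)
  have h2 := (((hH.differentiable (by simp)) (u, v)).hasFDerivAt).comp_hasDerivAt v h1
  exact h2.deriv ▸ rfl

lemma contDiff_pu (H : ℝ → ℝ → V) (hH : ContDiff ℝ (⊤ : ℕ∞) fun p : ℝ × ℝ => H p.1 p.2) :
    ContDiff ℝ (⊤ : ℕ∞) fun p : ℝ × ℝ => pu H p.1 p.2 := by
  have he : (fun p : ℝ × ℝ => pu H p.1 p.2)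
      = fun p => fderiv ℝ (fun q : ℝ × ℝ => H q.1 q.2) p (1, 0) := by
    funext p; exact pu_eq H hH p.1 p.2
  rw [he]
  exact (hH.fderiv_right (le_refl _)).clm_apply contDiff_const

lemma contDiff_pv (H : ℝ → ℝ → V) (hH : ContDiff ℝ (⊤ : ℕ∞) fun p : ℝ × ℝ => H p.1 p.2) :
    ContDiff ℝ (⊤ : ℕ∞) fun p : ℝ × ℝ => pv H p.1 p.2 := by
  have he : (fun p : ℝ × ℝ => pv H p.1 p.2)
      = fun p => fderiv ℝ (fun q : ℝ × ℝ => H q.1 q.2) p (0, 1) := by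
    funext p; exact pv_eq H hH p.1 p.2
  rw [he]
  exact (hH.fderiv_right (le_refl _)).clm_apply contDiff_const

lemma clairaut (H : ℝ → ℝ → V) (hH : ContDiff ℝ (⊤ : ℕ∞) fun p : ℝ × ℝ => H p.1 p.2) (u v : ℝ) :
    pv (pu H) u v = pu (pv H) u v := by
  set F : ℝ × ℝ → V := fun p => H p.1 p.2 with hF
  set F' : ℝ × ℝ → (ℝ × ℝ) →L[ℝ] V := fderiv ℝ F with hF'
  have hdF : ∀ p, HasFDerivAt F (F' p) p := fun p => ((hH.differentiable (by simp)) p).hasFDerivAt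
  have hsF' : ContDiff ℝ (⊤ : ℕ∞) F' := hH.fderiv_right (le_refl _)
  have hdF' : HasFDerivAt F' (fderiv ℝ F' (u, v)) (u, v) :=
    ((hsF'.differentiable (by simp)) (u, v)).hasFDerivAt
  set F'' := fderiv ℝ F' (u, v) with hF''
  have symm := second_derivative_symmetric hdF hdF' ((1:ℝ), (0:ℝ)) ((0:ℝ), (1:ℝ))
  -- pv (pu H) u v = F'' (0,1) (1,0)
  have e1 : pv (pu H) u v = F'' (0, 1) (1, 0) := by
    have hcurve : HasDerivAt (fun y : ℝ => (u, y)) ((0:ℝ), (1:ℝ)) v :=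
      (hasDerivAt_const v u).prodMk (hasDerivAt_id v)
    have h2 : HasDerivAt (fun y : ℝ => F' (u, y)) (F'' (0, 1)) v :=
      hdF'.comp_hasDerivAt v hcurve
    have h3 : HasDerivAt (fun y : ℝ => F' (u, y) (1, 0)) (F'' (0, 1) (1, 0)) v :=
      (ContinuousLinearMap.apply ℝ V ((1:ℝ), (0:ℝ))).hasFDerivAt.comp_hasDerivAt v h2
    have he : (fun y : ℝ => pu H u y) = fun y : ℝ => F' (u, y) (1, 0) := by
      funext y; exact pu_eq H hH u y
    show deriv (fun y => pu H u y) v = _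
    rw [he]; exact h3.deriv
  have e2 : pu (pv H) u v = F'' (1, 0) (0, 1) := by
    have hcurve : HasDerivAt (fun x : ℝ => (x, v)) ((1:ℝ), (0:ℝ)) u :=
      (hasDerivAt_id u).prodMk (hasDerivAt_const u v)
    have h2 : HasDerivAt (fun x : ℝ => F' (x, v)) (F'' (1, 0)) u :=
      hdF'.comp_hasDerivAt u hcurve
    have h3 : HasDerivAt (fun x : ℝ => F' (x, v) (0, 1)) (F'' (1, 0) (0, 1)) u :=
      (ContinuousLinearMap.apply ℝ V ((0:ℝ), (1:ℝ))).hasFDerivAt.comp_hasDerivAt u h2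
    have he : (fun x : ℝ => pv H x v) = fun x : ℝ => F' (x, v) (0, 1) := by
      funext x; exact pv_eq H hH x v
    show deriv (fun x => pv H x v) u = _
    rw [he]; exact h3.deriv
  rw [e1, e2, symm]
end slices

lemma comp_hasDerivAt {f : ℝ → Fin 3 → ℝ} {f' : Fin 3 → ℝ} {t : ℝ} (i : Fin 3)
    (hf : HasDerivAt f f' t) : HasDerivAt (fun x => f x i) (f' i) t :=
  hasDerivAt_pi.1 hf i

lemma HasDerivAt.dot {f g : ℝ → Fin 3 → ℝ} {f' g' : Fin 3 → ℝ} {t : ℝ}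
    (hf : HasDerivAt f f' t) (hg : HasDerivAt g g' t) :
    HasDerivAt (fun x => f x ⬝ᵥ g x) (f' ⬝ᵥ g t + f t ⬝ᵥ g') t := by
  have h : ∀ i : Fin 3, HasDerivAt (fun x => f x i * g x i)
      (f' i * g t i + f t i * g' i) t :=
    fun i => (comp_hasDerivAt i hf).mul (comp_hasDerivAt i hg)
  have : HasDerivAt (fun x => f x 0 * g x 0 + (f x 1 * g x 1 + f x 2 * g x 2))
      (f' 0 * g t 0 + f t 0 * g' 0 + (f' 1 * g t 1 + f t 1 * g' 1 + (f' 2 * g t 2 + f t 2 * g' 2))) t :=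
    (h 0).add ((h 1).add (h 2))
  simp only [dotProduct, Fin.sum_univ_three]
  convert this using 1 <;> (try funext x) <;> ring

lemma HasDerivAt.dotCross {f g h : ℝ → Fin 3 → ℝ} {f' g' h' : Fin 3 → ℝ} {t : ℝ}
    (hf : HasDerivAt f f' t) (hg : HasDerivAt g g' t) (hh : HasDerivAt h h' t) :
    HasDerivAt (fun x => f x ⬝ᵥ (crossProduct (g x) (h x)))
      (f' ⬝ᵥ (crossProduct (g t) (h t)) + f t ⬝ᵥ (crossProduct g' (h t))
        + f t ⬝ᵥ (crossProduct (g t) h')) t := by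
  have F := fun i => comp_hasDerivAt i hf
  have G := fun i => comp_hasDerivAt i hg
  have H := fun i => comp_hasDerivAt i hh
  have key : HasDerivAt (fun x =>
      f x 0 * (g x 1 * h x 2 - g x 2 * h x 1)
      + f x 1 * (g x 2 * h x 0 - g x 0 * h x 2)
      + f x 2 * (g x 0 * h x 1 - g x 1 * h x 0))
      (f' 0 * (g t 1 * h t 2 - g t 2 * h t 1)
        + f t 0 * (g' 1 * h t 2 + g t 1 * h' 2 - (g' 2 * h t 1 + g t 2 * h' 1))
      + (f' 1 * (g t 2 * h t 0 - g t 0 * h t 2)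
        + f t 1 * (g' 2 * h t 0 + g t 2 * h' 0 - (g' 0 * h t 2 + g t 0 * h' 2)))
      + (f' 2 * (g t 0 * h t 1 - g t 1 * h t 0)
        + f t 2 * (g' 0 * h t 1 + g t 0 * h' 1 - (g' 1 * h t 0 + g t 1 * h' 0)))) t := by
    exact (((F 0).mul (((G 1).mul (H 2)).sub ((G 2).mul (H 1)))).add
      ((F 1).mul (((G 2).mul (H 0)).sub ((G 0).mul (H 2))))).add
      ((F 2).mul (((G 0).mul (H 1)).sub ((G 1).mul (H 0))))
  simp only [cross_apply, dotProduct, Fin.sum_univ_three, Matrix.cons_val_zero,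
    Matrix.cons_val_one, Matrix.head_cons, Matrix.cons_val_two, Matrix.tail_cons]
  convert key using 1 <;> (try funext x) <;> ring

lemma dot_self_cross' (a b : Fin 3 → ℝ) : a ⬝ᵥ (crossProduct a b) = 0 := by
  simp [cross_apply, dotProduct, Fin.sum_univ_three]; ring

lemma dot_cross_self' (a b : Fin 3 → ℝ) : a ⬝ᵥ (crossProduct b a) = 0 := by
  simp [cross_apply, dotProduct, Fin.sum_univ_three]; ring

lemma triple_swap (a b c : Fin 3 → ℝ) :
    a ⬝ᵥ (crossProduct b c) = -(b ⬝ᵥ (crossProduct a c)) := by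
  simp [cross_apply, dotProduct, Fin.sum_univ_three]; ring

lemma key_zero (x y w : Fin 3 → ℝ) (hx : w ⬝ᵥ x = 0) (hy : w ⬝ᵥ y = 0)
    (hc : w ⬝ᵥ (crossProduct x y) = 0)
    (hG : (x ⬝ᵥ x) * (y ⬝ᵥ y) - (x ⬝ᵥ y) ^ 2 ≠ 0) : w = 0 := by
  have iden : (w ⬝ᵥ w) * ((x ⬝ᵥ x) * (y ⬝ᵥ y) - (x ⬝ᵥ y) ^ 2)
      = (w ⬝ᵥ (crossProduct x y)) ^ 2 + (w ⬝ᵥ x) ^ 2 * (y ⬝ᵥ y)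
        - 2 * (w ⬝ᵥ x) * (w ⬝ᵥ y) * (x ⬝ᵥ y) + (w ⬝ᵥ y) ^ 2 * (x ⬝ᵥ x) := by
    simp [cross_apply, dotProduct, Fin.sum_univ_three]; ring
  rw [hx, hy, hc] at iden
  have hww : w ⬝ᵥ w = 0 := by
    have := mul_eq_zero.1 (by linarith [iden] : (w ⬝ᵥ w) * ((x ⬝ᵥ x) * (y ⬝ᵥ y) - (x ⬝ᵥ y) ^ 2) = 0)
    tauto
  have hsum : w 0 ^ 2 + w 1 ^ 2 + w 2 ^ 2 = 0 := by
    simpa [dotProduct, Fin.sum_univ_three, sq] using hww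
  have key0 : ∀ a : ℝ, a ^ 2 ≤ 0 → a = 0 := fun a h =>
    pow_eq_zero_iff (two_ne_zero) |>.1 (le_antisymm h (sq_nonneg a))
  have h0 : w 0 = 0 := key0 _ (by nlinarith [sq_nonneg (w 1), sq_nonneg (w 2)])
  have h1 : w 1 = 0 := key0 _ (by nlinarith [sq_nonneg (w 0), sq_nonneg (w 2)])
  have h2 : w 2 = 0 := key0 _ (by nlinarith [sq_nonneg (w 0), sq_nonneg (w 1)])
  funext i
  fin_cases i <;> first | exact h0 | exact h1 | exact h2

theorem stmt_10 (Ψ : ℝ → ℝ → (Fin 3 → ℝ)) (φ L N K : ℝ → ℝ → ℝ)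
    (hΨ : ContDiff ℝ (⊤ : ℕ∞) fun p : ℝ × ℝ => Ψ p.1 p.2)
    (hφsm : ContDiff ℝ (⊤ : ℕ∞) fun p : ℝ × ℝ => φ p.1 p.2)
    (hφrange : ∀ u v, φ u v ∈ Set.Ioo 0 π)
    (hE : ∀ u v, pu Ψ u v ⬝ᵥ pu Ψ u v = 1)
    (hF : ∀ u v, pu Ψ u v ⬝ᵥ pv Ψ u v = Real.cos (φ u v))
    (hG : ∀ u v, pv Ψ u v ⬝ᵥ pv Ψ u v = 1)
    (hL : ∀ u v, pu (pu Ψ) u v ⬝ᵥ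
      ((Real.sin (φ u v))⁻¹ • crossProduct (pu Ψ u v) (pv Ψ u v)) = L u v)
    (hM : ∀ u v, pv (pu Ψ) u v ⬝ᵥ
      ((Real.sin (φ u v))⁻¹ • crossProduct (pu Ψ u v) (pv Ψ u v)) = 0)
    (hN : ∀ u v, pv (pv Ψ) u v ⬝ᵥ
      ((Real.sin (φ u v))⁻¹ • crossProduct (pu Ψ u v) (pv Ψ u v)) = N u v)
    (hGauss : ∀ u v, K u v = L u v * N u v / Real.sin (φ u v) ^ 2)
    (hK0 : ∀ u v, K u v = 0)
    (hLne : ∀ u v, L u v ≠ 0)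
    (hN0 : ∀ u v, N u v = 0) :
    (∀ u v, pv φ u v = 0) ∧
    ∃ (β : ℝ → (Fin 3 → ℝ)) (a : Fin 3 → ℝ),
      a ⬝ᵥ a = 1 ∧ ∀ u v, Ψ u v = β u + v • a := by
  have hXc : ContDiff ℝ (⊤ : ℕ∞) fun p : ℝ × ℝ => pu Ψ p.1 p.2 := contDiff_pu Ψ hΨ
  have hYc : ContDiff ℝ (⊤ : ℕ∞) fun p : ℝ × ℝ => pv Ψ p.1 p.2 := contDiff_pv Ψ hΨ
  have hZc : ContDiff ℝ (⊤ : ℕ∞) fun p : ℝ × ℝ => pv (pv Ψ) p.1 p.2 := contDiff_pv _ hYc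
  have hs : ∀ u v, 0 < Real.sin (φ u v) :=
    fun u v => Real.sin_pos_of_pos_of_lt_pi (hφrange u v).1 (hφrange u v).2
  have hGram : ∀ u v, (pu Ψ u v ⬝ᵥ pu Ψ u v) * (pv Ψ u v ⬝ᵥ pv Ψ u v)
      - (pu Ψ u v ⬝ᵥ pv Ψ u v) ^ 2 ≠ 0 := by
    intro u v
    rw [hE, hG, hF]
    have pyth := Real.sin_sq_add_cos_sq (φ u v)
    have := hs u v
    nlinarith
  -- Ψ_uv = 0
  have hXv0 : ∀ u v, pv (pu Ψ) u v = 0 := by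
    intro u v
    have dXv := slice_v (pu Ψ) hXc u v
    have dYv := slice_v (pv Ψ) hYc u v
    have dYu := slice_u (pv Ψ) hYc u v
    have step1 : pv (pu Ψ) u v ⬝ᵥ pu Ψ u v = 0 := by
      have h := dXv.dot dXv
      rw [funext fun y => hE u y] at h
      have h0 := h.unique (hasDerivAt_const v 1)
      have hcomm := dotProduct_comm (pu Ψ u v) (pv (pu Ψ) u v)
      linarith [h0, hcomm.symm.trans rfl]
    have step2 : pv (pu Ψ) u v ⬝ᵥ pv Ψ u v = 0 := by
      have h := dYu.dot dYu
      rw [funext fun x => hG x v] at h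
      have h0 := h.unique (hasDerivAt_const u 1)
      have hcomm := dotProduct_comm (pv Ψ u v) (pu (pv Ψ) u v)
      rw [clairaut Ψ hΨ u v]
      linarith
    have step3 : pv (pu Ψ) u v ⬝ᵥ (crossProduct (pu Ψ u v) (pv Ψ u v)) = 0 := by
      have h := hM u v
      rw [dotProduct_smul, smul_eq_mul] at h
      exact (mul_eq_zero.1 h).resolve_left (inv_ne_zero (ne_of_gt (hs u v)))
    exact key_zero _ _ _ step1 step2 step3 (hGram u v)
  have hYu0 : ∀ u v, pu (pv Ψ) u v = 0 := fun u v => (clairaut Ψ hΨ u v) ▸ hXv0 u v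
  -- relations for Z = Ψ_vv
  have hZY : ∀ u v, pv (pv Ψ) u v ⬝ᵥ pv Ψ u v = 0 := by
    intro u v
    have dYv := slice_v (pv Ψ) hYc u v
    have h := dYv.dot dYv
    rw [funext fun y => hG u y] at h
    have h0 := h.unique (hasDerivAt_const v 1)
    have hcomm := dotProduct_comm (pv Ψ u v) (pv (pv Ψ) u v)
    linarith
  have hXZ : ∀ u v, pu Ψ u v ⬝ᵥ pv (pv Ψ) u v = -Real.sin (φ u v) * pv φ u v := by
    intro u v
    have dXv := slice_v (pu Ψ) hXc u v
    have dYv := slice_v (pv Ψ) hYc u v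
    have h := dXv.dot dYv
    rw [funext fun y => hF u y] at h
    have hc : HasDerivAt (fun y => Real.cos (φ u y)) (-Real.sin (φ u v) * pv φ u v) v :=
      (slice_v φ hφsm u v).cos
    have h0 := h.unique hc
    rw [hXv0 u v, zero_dotProduct] at h0
    linarith
  have hZC : ∀ u v, pv (pv Ψ) u v ⬝ᵥ (crossProduct (pu Ψ u v) (pv Ψ u v)) = 0 := by
    intro u v
    have h := (hN u v).trans (hN0 u v)
    rw [dotProduct_smul, smul_eq_mul] at h
    exact (mul_eq_zero.1 h).resolve_left (inv_ne_zero (ne_of_gt (hs u v)))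
  have hWC : ∀ u v, pu (pu Ψ) u v ⬝ᵥ (crossProduct (pu Ψ u v) (pv Ψ u v))
      = Real.sin (φ u v) * L u v := by
    intro u v
    have h := hL u v
    rw [dotProduct_smul, smul_eq_mul, inv_mul_eq_iff_eq_mul₀ (ne_of_gt (hs u v))] at h
    rw [h]
  have hpuZ : ∀ u v, pu (pv (pv Ψ)) u v = 0 := by
    intro u v
    rw [← clairaut (pv Ψ) hYc u v]
    show deriv (fun y => pu (pv Ψ) u y) v = 0
    rw [funext fun y => hYu0 u y]
    exact deriv_const v 0
  have htrip : ∀ u v, pv (pv Ψ) u v ⬝ᵥ (crossProduct (pu (pu Ψ) u v) (pv Ψ u v)) = 0 := by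
    intro u v
    have dZu := slice_u (pv (pv Ψ)) hZc u v
    have dXu := slice_u (pu Ψ) hXc u v
    have dYu := slice_u (pv Ψ) hYc u v
    have h := dZu.dotCross dXu dYu
    rw [funext fun x => hZC x v] at h
    have h0 := h.unique (hasDerivAt_const u 0)
    rw [hpuZ u v, zero_dotProduct, hYu0 u v] at h0
    have : (crossProduct (pu Ψ u v)) (0 : Fin 3 → ℝ) = 0 := map_zero _
    rw [this, dotProduct_zero] at h0
    linarith
  -- decomposition and conclusion, pointwise
  have main : ∀ u v, pv φ u v = 0 ∧ pv (pv Ψ) u v = 0 := by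
    intro u v
    set s := Real.sin (φ u v) with hsdef
    set c := Real.cos (φ u v) with hcdef
    set p := pv φ u v with hpdef
    have hsne : s ≠ 0 := ne_of_gt (hs u v)
    have pyth : s ^ 2 + c ^ 2 = 1 := Real.sin_sq_add_cos_sq (φ u v)
    set w := s • pv (pv Ψ) u v + p • pu Ψ u v - (c * p) • pv Ψ u v with hwdef
    have hw : w = 0 := by
      apply key_zero (pu Ψ u v) (pv Ψ u v) w _ _ _ (hGram u v)
      · rw [hwdef]
        simp only [sub_dotProduct, add_dotProduct, smul_dotProduct, smul_eq_mul]
        rw [hE, dotProduct_comm (pv (pv Ψ) u v) (pu Ψ u v), hXZ,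
          dotProduct_comm (pv Ψ u v) (pu Ψ u v), hF]
        linear_combination (-p) * pyth
      · rw [hwdef]
        simp only [sub_dotProduct, add_dotProduct, smul_dotProduct, smul_eq_mul]
        rw [hZY, hG, hF]
        ring
      · rw [hwdef]
        simp only [sub_dotProduct, add_dotProduct, smul_dotProduct, smul_eq_mul]
        rw [hZC, dot_self_cross', dot_cross_self']
        ring
    have hp0 : p = 0 := by
      have h1 : w ⬝ᵥ (crossProduct (pu (pu Ψ) u v) (pv Ψ u v)) = 0 := by
        rw [hw, zero_dotProduct]
      rw [hwdef] at h1
      simp only [sub_dotProduct, add_dotProduct, smul_dotProduct, smul_eq_mul] at h1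
      rw [htrip, dot_cross_self'] at h1
      rw [triple_swap, hWC] at h1
      have : p * (s * L u v) = 0 := by linarith
      rcases mul_eq_zero.1 this with h | h
      · exact h
      · exact absurd (mul_eq_zero.1 h) (by push_neg; exact ⟨hsne, hLne u v⟩)
    constructor
    · exact hp0
    · have : s • pv (pv Ψ) u v = 0 := by
        have := hw
        rw [hwdef, hp0] at this
        simpa using this
      rcases smul_eq_zero.1 this with h | h
      · exact absurd h hsne
      · exact h
  have hpφ : ∀ u v, pv φ u v = 0 := fun u v => (main u v).1
  have hZ0 : ∀ u v, pv (pv Ψ) u v = 0 := fun u v => (main u v).2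
  refine ⟨hpφ, fun u => Ψ u 0, pv Ψ 0 0, hG 0 0, ?_⟩
  intro u v
  have hYconst : ∀ u' v', pv Ψ u' v' = pv Ψ 0 0 := by
    intro u' v'
    have h1 : pv Ψ u' v' = pv Ψ u' 0 := by
      apply is_const_of_deriv_eq_zero (f := fun y => pv Ψ u' y)
      · exact fun y => (slice_v (pv Ψ) hYc u' y).differentiableAt
      · intro y
        rw [(slice_v (pv Ψ) hYc u' y).deriv]
        exact hZ0 u' y
    have h2 : pv Ψ u' 0 = pv Ψ 0 0 := by
      apply is_const_of_deriv_eq_zero (f := fun x => pv Ψ x 0)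
      · exact fun x => (slice_u (pv Ψ) hYc x 0).differentiableAt
      · intro x
        rw [(slice_u (pv Ψ) hYc x 0).deriv]
        exact hYu0 x 0
    exact h1.trans h2
  set a := pv Ψ 0 0 with hadef
  have hg : ∀ y : ℝ, HasDerivAt (fun y => Ψ u y - y • a) 0 y := by
    intro y
    have h1 := slice_v Ψ hΨ u y
    have h2 : HasDerivAt (fun x : ℝ => x • a) a y := by
      simpa using (hasDerivAt_id y).smul_const a
    have := h1.sub h2
    rwa [hYconst u y, sub_self] at this
  have hconst : Ψ u v - v • a = Ψ u 0 - (0:ℝ) • a := by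
    apply is_const_of_deriv_eq_zero (f := fun y => Ψ u y - y • a)
    · exact fun y => (hg y).differentiableAt
    · exact fun y => (hg y).deriv
  rw [zero_smul, sub_zero] at hconst
  rw [sub_eq_iff_eq_add] at hconst
  exact hconst
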